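/- arXiv:2508.19585 — 2 statements merged into one kernel-verified Lean document; each statement's English description precedes it below -/
import Mathlib

section
/- Let S be a finite set, μ a capacity on 2^S with Möbius inverse m, and suppose μ is modular on a collection 𝒞 of 'critical' events closed under union and intersection, meaning μ(E ∪ F) + μ(E ∩ F) = μ(E) + μ(F) for all E, F ∈ 𝒞. Suppose also every event E with m(E) > 0 belongs to 𝒞, and an event is critical whenever it is a union of events with strictly positive Möbius mass. Then m(E) ≥ 0 for every E ⊆ S. -/
/-!
Möbius inversion gives `μ X = ∑_{A ⊆ X} m A`, and modularity of `μ` on the lattice `𝒞` is an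
inclusion–exclusion principle: the Möbius mass of the subsets of a critical `W` lying below one
of finitely many critical events `G₁, …, Gₖ` is `μ (W ∩ ⋃ Gᵢ)`.

Argue by strong induction on `E`. Let `B` be the union of the proper subsets of `E` with positive
mass; every other proper subset of `E` then has mass zero. If `B ≠ E`, this gives
`m E = μ E - μ B ≥ 0` by monotonicity. If `B = E`, then `E` is critical and the
inclusion–exclusion principle with `W = E` gives `m E = μ E - μ E = 0`.
-/

open Finset

namespace Finset

variable {α : Type*} [DecidableEq α]

theorem sum_Icc_neg_one_pow_card_sdiff {R : Type*} [CommRing R] {B X : Finset α} (h : B ⊆ X) :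
    ∑ A ∈ Icc B X, (-1 : R) ^ #(A \ B) = if B = X then 1 else 0 := by
  have hdisj {C : Finset α} (hC : C ∈ (X \ B).powerset) : Disjoint C B :=
    (subset_sdiff.1 (mem_powerset.1 hC)).2
  have hinj : Set.InjOn (B ∪ ·) (X \ B).powerset := fun C hC D hD hCD => by
    simpa [union_sdiff_left, (hdisj hC).sdiff_eq_left, (hdisj hD).sdiff_eq_left] using
      congrArg (· \ B) hCD
  rw [Icc_eq_image_powerset h, sum_image hinj]
  calc ∑ C ∈ (X \ B).powerset, (-1 : R) ^ #((B ∪ C) \ B)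
      = ((∑ C ∈ (X \ B).powerset, (-1 : ℤ) ^ #C : ℤ) : R) := by
        push_cast
        refine sum_congr rfl fun C hC => ?_
        rw [union_sdiff_left, (hdisj hC).sdiff_eq_left]
    _ = if B = X then 1 else 0 := by
        have hXB : X \ B = ∅ ↔ B = X := by
          rw [sdiff_eq_empty_iff_subset]
          exact ⟨h.antisymm, fun e => e ▸ subset_rfl⟩
        simp only [sum_powerset_neg_one_pow_card, hXB]
        push_cast
        rfl

theorem sum_powerset_eq_of_moebius {R : Type*} [CommRing R] {μ m : Finset α → R}
    (hm : ∀ E, m E = ∑ A ∈ E.powerset, (-1 : R) ^ #(E \ A) * μ A) (X : Finset α) :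
    ∑ A ∈ X.powerset, m A = μ X := by
  simp only [hm]
  rw [sum_comm' (t' := X.powerset) (s' := fun B => Icc B X)]
  · calc ∑ B ∈ X.powerset, ∑ A ∈ Icc B X, (-1 : R) ^ #(A \ B) * μ B
        = ∑ B ∈ X.powerset, if B = X then μ B else 0 := by
          refine sum_congr rfl fun B hB => ?_
          rw [← sum_mul, sum_Icc_neg_one_pow_card_sdiff (mem_powerset.1 hB), ite_mul, one_mul,
            zero_mul]
      _ = μ X := by simp
  · intro A B
    simp only [mem_powerset, mem_Icc]
    exact ⟨fun ⟨hA, hB⟩ => ⟨⟨hB, hA⟩, hB.trans hA⟩, fun ⟨⟨hB, hA⟩, _⟩ => ⟨hA, hB⟩⟩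

end Finset

section Capacity

variable {α M : Type*} [DecidableEq α] [AddCommGroup M] {μ m : Finset α → M}

theorem sum_sup_powerset_inter_eq (hinv : ∀ X, ∑ A ∈ X.powerset, m A = μ X)
    {𝒞 : Set (Finset α)} (hsup : SupClosed 𝒞) (hinf : InfClosed 𝒞)
    (hmod : ∀ E ∈ 𝒞, ∀ F ∈ 𝒞, μ (E ∪ F) + μ (E ∩ F) = μ E + μ F)
    {𝒢 : Finset (Finset α)} (h𝒢 : 𝒢.Nonempty) (h𝒢𝒞 : ∀ G ∈ 𝒢, G ∈ 𝒞) {W : Finset α}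
    (hW : W ∈ 𝒞) : ∑ C ∈ 𝒢.sup fun G => (W ∩ G).powerset, m C = μ (W ∩ 𝒢.sup id) := by
  induction h𝒢 using Nonempty.cons_induction generalizing W with
  | singleton A => simpa only [sup_singleton, id] using hinv (W ∩ A)
  | cons A 𝒢 hA h𝒢 ih =>
    have hA𝒞 : A ∈ 𝒞 := h𝒢𝒞 A (mem_cons_self A 𝒢)
    have h𝒢𝒞 : ∀ G ∈ 𝒢, G ∈ 𝒞 := fun G hG => h𝒢𝒞 G (mem_cons_of_mem hG)
    set U := 𝒢.sup id
    have hU : U ∈ 𝒞 := hsup.finsetSup_mem h𝒢 h𝒢𝒞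
    have hWA : W ∩ A ∈ 𝒞 := hinf hW hA𝒞
    have hWU : W ∩ U ∈ 𝒞 := hinf hW hU
    have hinter : (W ∩ A).powerset ∩ 𝒢.sup (fun G => (W ∩ G).powerset)
        = 𝒢.sup fun G => (W ∩ A ∩ G).powerset := by
      rw [← inf_eq_inter, sup_inf_distrib_left]
      congr 1
      ext G C
      simp only [inf_eq_inter, mem_inter, mem_powerset, subset_inter_iff, and_assoc]
      tauto
    have hunion : W ∩ A ∪ W ∩ U = W ∩ (A ∪ U) := (inter_union_distrib_left W A U).symm
    have hcap : W ∩ A ∩ (W ∩ U) = W ∩ A ∩ U := by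
      ext; simp only [mem_inter]; tauto
    have hsum := sum_union_inter (s₁ := (W ∩ A).powerset)
      (s₂ := 𝒢.sup fun G => (W ∩ G).powerset) (f := m)
    rw [hinter, ih h𝒢𝒞 hWA, ih h𝒢𝒞 hW, hinv, ← hmod _ hWA _ hWU, hunion, hcap] at hsum
    simpa only [sup_cons, id, sup_eq_union] using add_right_cancel hsum

theorem eq_sub_sum_of_forall_ssubset_nonneg [PartialOrder M]
    (hinv : ∀ X, ∑ A ∈ X.powerset, m A = μ X) {E : Finset α} (hE : ∀ A ⊂ E, 0 ≤ m A)
    {𝒟 : Finset (Finset α)} (h𝒟 : 𝒟 ⊆ E.powerset) (hE𝒟 : E ∉ 𝒟)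
    (hpos𝒟 : ∀ A ⊂ E, 0 < m A → A ∈ 𝒟) : m E = μ E - ∑ A ∈ 𝒟, m A := by
  rw [← hinv E, ← sum_sdiff h𝒟, add_sub_cancel_right]
  refine (sum_eq_single_of_mem E (mem_sdiff.2 ⟨mem_powerset_self E, hE𝒟⟩)
    fun A hA hAE => ?_).symm
  obtain ⟨hAE', hA𝒟⟩ := mem_sdiff.1 hA
  have hAE : A ⊂ E := (mem_powerset.1 hAE').ssubset_of_ne hAE
  exact ((hE A hAE).eq_of_not_lt fun h => hA𝒟 (hpos𝒟 A hAE h)).symm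

theorem moebius_nonneg_of_forall_ssubset [PartialOrder M] [IsOrderedAddMonoid M]
    (hinv : ∀ X, ∑ A ∈ X.powerset, m A = μ X) (hground : μ ∅ = 0) (hmono : Monotone μ)
    {𝒞 : Set (Finset α)} (hsup : SupClosed 𝒞) (hinf : InfClosed 𝒞)
    (hmod : ∀ E ∈ 𝒞, ∀ F ∈ 𝒞, μ (E ∪ F) + μ (E ∩ F) = μ E + μ F)
    (hpos : ∀ E, 0 < m E → E ∈ 𝒞)
    (hcover : ∀ T : Finset (Finset α), T.Nonempty → (∀ A ∈ T, 0 < m A) → T.sup id ∈ 𝒞)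
    {E : Finset α} (hE : ∀ A ⊂ E, 0 ≤ m A) : 0 ≤ m E := by
  classical
  set T := {A ∈ E.ssubsets | 0 < m A}
  have hT {A : Finset α} : A ∈ T ↔ A ⊂ E ∧ 0 < m A := by simp [T]
  have hTE : T.sup id ⊆ E := Finset.sup_le fun A hA => (hT.1 hA).1.subset
  by_cases hcov : T.sup id = E
  · rcases T.eq_empty_or_nonempty with hT0 | hTne
    · obtain rfl : E = ∅ := by rw [← hcov, hT0, sup_empty]; rfl
      simpa [hground] using (hinv ∅).ge
    have hE𝒞 : E ∈ 𝒞 := hcov ▸ hcover T hTne fun A hA => (hT.1 hA).2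
    have hmE := eq_sub_sum_of_forall_ssubset_nonneg hinv hE
      (𝒟 := T.sup fun G => (E ∩ G).powerset)
      (Finset.sup_le fun G _ => powerset_mono.2 inter_subset_left)
      (fun h => by
        obtain ⟨G, hG, hEG⟩ := mem_sup.1 h
        exact (hT.1 hG).1.not_subset ((mem_powerset.1 hEG).trans inter_subset_right))
      (fun A hA hmA =>
        mem_sup.2 ⟨A, hT.2 ⟨hA, hmA⟩, mem_powerset.2 (subset_inter hA.subset subset_rfl)⟩)
    rw [sum_sup_powerset_inter_eq hinv hsup hinf hmod hTne (fun A hA => hpos A (hT.1 hA).2) hE𝒞,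
      hcov, inter_self, sub_self] at hmE
    exact hmE.ge
  · have hmE := eq_sub_sum_of_forall_ssubset_nonneg hinv hE (𝒟 := (T.sup id).powerset)
      (powerset_mono.2 hTE) (fun h => hcov (hTE.antisymm (mem_powerset.1 h)))
      (fun A hA hmA => mem_powerset.2 (le_sup (f := id) (hT.2 ⟨hA, hmA⟩)))
    rw [hinv] at hmE
    exact hmE ▸ sub_nonneg.2 (hmono hTE)

end Capacity

theorem stmt_2_general {S : Type*} [DecidableEq S] (μ : Finset S → ℝ)
    (hground : μ ∅ = 0)
    (hmono : ∀ A B : Finset S, A ⊆ B → μ A ≤ μ B)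
    (m : Finset S → ℝ)
    (hm : ∀ E : Finset S, m E = ∑ A ∈ E.powerset, (-1 : ℝ) ^ (E \ A).card * μ A)
    (𝒞 : Set (Finset S))
    (hUnion : ∀ E ∈ 𝒞, ∀ F ∈ 𝒞, E ∪ F ∈ 𝒞)
    (hInter : ∀ E ∈ 𝒞, ∀ F ∈ 𝒞, E ∩ F ∈ 𝒞)
    (hmod : ∀ E ∈ 𝒞, ∀ F ∈ 𝒞, μ (E ∪ F) + μ (E ∩ F) = μ E + μ F)
    (hpos : ∀ E : Finset S, 0 < m E → E ∈ 𝒞)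
    (hcover : ∀ T : Finset (Finset S), T.Nonempty → (∀ A ∈ T, 0 < m A) → T.sup id ∈ 𝒞) :
    ∀ E : Finset S, 0 ≤ m E := by
  intro E
  induction E using Finset.strongInduction with
  | H E ih =>
    exact moebius_nonneg_of_forall_ssubset (sum_powerset_eq_of_moebius hm) hground
      (fun A B => hmono A B) (fun E hE F hF => hUnion E hE F hF)
      (fun E hE F hF => hInter E hE F hF) hmod hpos hcover ih

/-- If a capacity is modular on a collection 𝒞 of critical events closed under unions and
intersections, 𝒞 contains every event of positive Möbius mass, and every (nonempty finite)
union of events with positive Möbius mass is critical, then the Möbius inverse is nonnegative. -/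
theorem stmt_2 {S : Type*} [Fintype S] [DecidableEq S] (μ : Finset S → ℝ)
    (hground : μ ∅ = 0) (hnorm : μ Finset.univ = 1)
    (hmono : ∀ A B : Finset S, A ⊆ B → μ A ≤ μ B)
    (m : Finset S → ℝ)
    (hm : ∀ E : Finset S, m E = ∑ A ∈ E.powerset, (-1 : ℝ) ^ (E \ A).card * μ A)
    (𝒞 : Set (Finset S))
    (hUnion : ∀ E ∈ 𝒞, ∀ F ∈ 𝒞, E ∪ F ∈ 𝒞)
    (hInter : ∀ E ∈ 𝒞, ∀ F ∈ 𝒞, E ∩ F ∈ 𝒞)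
    (hmod : ∀ E ∈ 𝒞, ∀ F ∈ 𝒞, μ (E ∪ F) + μ (E ∩ F) = μ E + μ F)
    (hpos : ∀ E : Finset S, 0 < m E → E ∈ 𝒞)
    (hcover : ∀ T : Finset (Finset S), T.Nonempty → (∀ A ∈ T, 0 < m A) → T.sup id ∈ 𝒞) :
    ∀ E : Finset S, 0 ≤ m E :=
  stmt_2_general μ hground hmono m hm 𝒞 hUnion hInter hmod hpos hcover
end

section
/- Let S be a finite set and 𝒱 a collection of nonempty subsets of S closed under intersections such that for every s ∈ ∪𝒱 the minimal element φ(s) of 𝒱 containing s exists. Then the closure of 𝒱 under unions, cl_∪(𝒱), is uniquely determined by the function V(·,·) defined by V(a,s) = max_{E ∈ 𝒱, s ∈ E} min_{t ∈ E} a(t): that is, if 𝒱 and 𝒱' are two such collections with V_𝒱(a,s) = V_𝒱'(a,s) for all a : S → ℝ and all s, then the minimal elements coincide: φ_𝒱(s) = φ_𝒱'(s) for all s ∈ ∪𝒱 = ∪𝒱'. -/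
/-- Minimum of `v` over a finite set (0 if empty). -/
noncomputable def finsetMinOn {α : Type*} (E : Finset α) (v : α → ℝ) : ℝ :=
  if h : E.Nonempty then E.inf' h v else 0

/-- Maximum of `v` over a finite set (0 if empty). -/
noncomputable def finsetMaxOn {α : Type*} (E : Finset α) (v : α → ℝ) : ℝ :=
  if h : E.Nonempty then E.sup' h v else 0

/-!
Testing `V` against the indicator `1_T` of a set `T` detects exactly whether some member of `𝒱`
containing `s` lies inside `T`: `V_𝒱(1_T, s) = 1` iff such a member exists. With `T = univ`
this recovers `⋃ 𝒱`, and for `s ∈ ⋃ 𝒱` the existence of such a member is equivalent to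
`φ_𝒱(s) ⊆ T`. Hence equal value functions give `φ_𝒱(s) ⊆ T ↔ φ_𝒱'(s) ⊆ T` for every `T`.
-/

open Finset

section

variable {α β : Type*}

lemma indicator_one_apply_le_one (T : Set α) (t : α) : T.indicator (1 : α → ℝ) t ≤ 1 :=
  Set.indicator_le_self' (fun _ _ => zero_le_one) t

lemma finsetMinOn_le {E : Finset α} (v : α → ℝ) {t : α} (ht : t ∈ E) :
    finsetMinOn E v ≤ v t := by
  rw [finsetMinOn, dif_pos ⟨t, ht⟩]
  exact inf'_le v ht

lemma finsetMinOn_indicator_one_eq_one_iff {E : Finset α} (hE : E.Nonempty) (T : Set α) :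
    finsetMinOn E (T.indicator 1) = 1 ↔ ↑E ⊆ T := by
  have one_le_iff : ∀ t, 1 ≤ T.indicator (1 : α → ℝ) t ↔ t ∈ T := fun t => by
    by_cases ht : t ∈ T <;> simp [ht]
  obtain ⟨t, ht⟩ := id hE
  rw [le_antisymm_iff, and_iff_right ((finsetMinOn_le _ ht).trans (indicator_one_apply_le_one T t)),
    finsetMinOn, dif_pos hE, le_inf'_iff]
  simp only [one_le_iff]
  rfl

lemma finsetMaxOn_eq_one_iff {F : Finset β} {v : β → ℝ} (hv : ∀ x ∈ F, v x ≤ 1) :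
    finsetMaxOn F v = 1 ↔ ∃ x ∈ F, v x = 1 := by
  by_cases hF : F.Nonempty
  · rw [finsetMaxOn, dif_pos hF, le_antisymm_iff, and_iff_right (sup'_le hF v hv), le_sup'_iff]
    exact exists_congr fun x => and_congr_right fun hx => ⟨le_antisymm (hv x hx), ge_of_eq⟩
  · rw [finsetMaxOn, dif_neg hF]
    simp only [zero_ne_one, false_iff, not_exists, not_and]
    exact fun x hx _ => hF ⟨x, hx⟩

section Value

variable [DecidableEq α]

/-- The value function `V_𝒱(a, s)` of the statement. -/
noncomputable def verificationValue (𝒱 : Finset (Finset α)) (a : α → ℝ) (s : α) : ℝ :=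
  finsetMaxOn (𝒱.filter (fun E => s ∈ E)) (fun E => finsetMinOn E a)

lemma verificationValue_indicator_one_eq_one_iff (𝒱 : Finset (Finset α)) (T : Set α) (s : α) :
    verificationValue 𝒱 (T.indicator 1) s = 1 ↔ ∃ E ∈ 𝒱, s ∈ E ∧ ↑E ⊆ T := by
  have le_one : ∀ E ∈ 𝒱.filter (fun E => s ∈ E), finsetMinOn E (T.indicator 1) ≤ 1 :=
    fun E hE => (finsetMinOn_le _ (mem_filter.mp hE).2).trans (indicator_one_apply_le_one T s)
  rw [verificationValue, finsetMaxOn_eq_one_iff le_one]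
  simp only [mem_filter, and_assoc]
  exact exists_congr fun E => and_congr_right fun _ => and_congr_right fun hsE =>
    finsetMinOn_indicator_one_eq_one_iff ⟨s, hsE⟩ T

lemma exists_mem_subset_iff_of_verificationValue_eq {𝒱 𝒱' : Finset (Finset α)}
    (hV : ∀ a s, verificationValue 𝒱 a s = verificationValue 𝒱' a s) (s : α) (T : Set α) :
    (∃ E ∈ 𝒱, s ∈ E ∧ ↑E ⊆ T) ↔ ∃ E ∈ 𝒱', s ∈ E ∧ ↑E ⊆ T := by
  rw [← verificationValue_indicator_one_eq_one_iff, ← verificationValue_indicator_one_eq_one_iff,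
    hV]

end Value

lemma exists_mem_subset_iff_of_isLeast {𝒱 : Finset (Finset α)} {s : α} {M : Finset α}
    (hM : M ∈ 𝒱 ∧ s ∈ M ∧ ∀ F ∈ 𝒱, s ∈ F → M ⊆ F) (T : Set α) :
    (∃ E ∈ 𝒱, s ∈ E ∧ ↑E ⊆ T) ↔ ↑M ⊆ T := by
  obtain ⟨hM𝒱, hsM, hMmin⟩ := hM
  exact ⟨fun ⟨E, hE, hsE, hET⟩ => (coe_subset.mpr (hMmin E hE hsE)).trans hET,
    fun hMT => ⟨M, hM𝒱, hsM, hMT⟩⟩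

end

theorem stmt_19_general {S : Type*} [DecidableEq S]
    (𝒱 𝒱' : Finset (Finset S))
    (φ φ' : S → Finset S)
    (hφ : ∀ s ∈ 𝒱.biUnion id, φ s ∈ 𝒱 ∧ s ∈ φ s ∧ ∀ F ∈ 𝒱, s ∈ F → φ s ⊆ F)
    (hφ' : ∀ s ∈ 𝒱'.biUnion id, φ' s ∈ 𝒱' ∧ s ∈ φ' s ∧ ∀ F ∈ 𝒱', s ∈ F → φ' s ⊆ F)
    (hV : ∀ (a : S → ℝ) (s : S),
      finsetMaxOn (𝒱.filter (fun E => s ∈ E)) (fun E => finsetMinOn E a)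
        = finsetMaxOn (𝒱'.filter (fun E => s ∈ E)) (fun E => finsetMinOn E a)) :
    𝒱.biUnion id = 𝒱'.biUnion id ∧ ∀ s ∈ 𝒱.biUnion id, φ s = φ' s := by
  have key := exists_mem_subset_iff_of_verificationValue_eq (𝒱 := 𝒱) (𝒱' := 𝒱') hV
  have hcov : 𝒱.biUnion id = 𝒱'.biUnion id := by
    ext s
    simpa using key s Set.univ
  refine ⟨hcov, fun s hs => ?_⟩
  have hsub : ∀ T : Set S, ↑(φ s) ⊆ T ↔ ↑(φ' s) ⊆ T := fun T => by
    rw [← exists_mem_subset_iff_of_isLeast (hφ s hs),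
      ← exists_mem_subset_iff_of_isLeast (hφ' s (hcov ▸ hs)), key]
  exact coe_injective (subset_antisymm ((hsub _).mpr subset_rfl) ((hsub _).mp subset_rfl))

/-- The verification value function `V(a,s)` uniquely determines the minimal verifiable
events: if two intersection-closed collections induce the same `V`, they cover the same
states and have the same minimal elements. -/
theorem stmt_19 {S : Type*} [Fintype S] [DecidableEq S]
    (𝒱 𝒱' : Finset (Finset S))
    (hne : ∀ E ∈ 𝒱, E.Nonempty) (hne' : ∀ E ∈ 𝒱', E.Nonempty)
    (hInter : ∀ E ∈ 𝒱, ∀ F ∈ 𝒱, E ∩ F ∈ 𝒱)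
    (hInter' : ∀ E ∈ 𝒱', ∀ F ∈ 𝒱', E ∩ F ∈ 𝒱')
    (φ φ' : S → Finset S)
    (hφ : ∀ s ∈ 𝒱.biUnion id, φ s ∈ 𝒱 ∧ s ∈ φ s ∧ ∀ F ∈ 𝒱, s ∈ F → φ s ⊆ F)
    (hφ' : ∀ s ∈ 𝒱'.biUnion id, φ' s ∈ 𝒱' ∧ s ∈ φ' s ∧ ∀ F ∈ 𝒱', s ∈ F → φ' s ⊆ F)
    (hV : ∀ (a : S → ℝ) (s : S),
      finsetMaxOn (𝒱.filter (fun E => s ∈ E)) (fun E => finsetMinOn E a)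
        = finsetMaxOn (𝒱'.filter (fun E => s ∈ E)) (fun E => finsetMinOn E a)) :
    𝒱.biUnion id = 𝒱'.biUnion id ∧ ∀ s ∈ 𝒱.biUnion id, φ s = φ' s :=
  stmt_19_general 𝒱 𝒱' φ φ' hφ hφ' hV
end
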